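/- arXiv:1605.06719 — 5 statements merged into one kernel-verified Lean document; each statement's English description precedes it below -/
import Mathlib

section
/- Let (A, ⊕, 0) be a partial commutative monoid and ι : A. There exists a function n : A → A such that for all x y, x ⊕ y = some ι ↔ y = n x, if and only if ι is unbiased; moreover any such n is an involution (n (n x) = x for all x). (This is the instance, for sets and partial functions, of the bijective correspondence between orthocomplement operations and unbiased vectors.) -/
/-- In a PCM, an orthocomplement operation with respect to `ι` exists iff `ι`
is unbiased; moreover any such orthocomplement is an involution. -/
theorem orthocomplement_exists_iff_unbiased {A : Type*}
    (op : A → A → Option A) (zero : A) (ι : A)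
    (hcomm : ∀ x y, op x y = op y x)
    (hassoc : ∀ x y z,
      (op x y).bind (fun w => op w z) = (op y z).bind (fun w => op x w))
    (hunit : ∀ x, op zero x = some x) :
    ((∃ n : A → A, ∀ x y, op x y = some ι ↔ y = n x) ↔
      (∀ x z, (∃ y, op x y = some ι ∧ op y z = some ι) ↔ x = z)) ∧
    (∀ n : A → A, (∀ x y, op x y = some ι ↔ y = n x) → ∀ x, n (n x) = x) := by
  have inv : ∀ n : A → A, (∀ x y, op x y = some ι ↔ y = n x) → ∀ x, n (n x) = x := by
    intro n hn x
    have h1 : op x (n x) = some ι := (hn x (n x)).mpr rfl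
    have h2 : op (n x) x = some ι := (hcomm x (n x) ▸ h1)
    exact ((hn (n x) x).mp h2).symm
  refine ⟨⟨?_, ?_⟩, inv⟩
  · rintro ⟨n, hn⟩ x z
    constructor
    · rintro ⟨y, hxy, hyz⟩
      have : y = n x := (hn x y).mp hxy
      have : z = n y := (hn y z).mp hyz
      subst this
      rw [(hn x y).mp hxy]
      exact (inv n hn x).symm
    · rintro rfl
      refine ⟨n x, (hn x (n x)).mpr rfl, ?_⟩
      rw [hcomm]
      exact (hn x (n x)).mpr rfl
  · intro hu
    have hex : ∀ x, ∃ y, op x y = some ι ∧ op y x = some ι := fun x => (hu x x).mpr rfl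
    refine ⟨fun x => Classical.choose (hex x), fun x y => ?_⟩
    obtain ⟨h1, h2⟩ := Classical.choose_spec (hex x)
    constructor
    · intro hxy
      apply (hu y (Classical.choose (hex x))).mp
      exact ⟨x, hcomm x y ▸ hxy, h1⟩
    · rintro rfl
      exact h1
end

section
/- Antispeciality is equivalent to positivity (the partial-function instance of 'antispecial Frobenius algebras are effect algebras'): in an orthocomplemented partial commutative monoid (A, ⊕, 0, 1, neg) with x ⊓ y := (neg x ⊕ neg y).map neg, the following are equivalent: (i) for all x y u v, if x ⊕ y = some u and x ⊓ y = some v then u = 1 and v = 0 (i.e., whenever both the join and the meet of x and y are defined, they equal 1 and 0 respectively); (ii) positivity: for all x y, x ⊕ y = some 0 implies x = 0 and y = 0. -/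
/-- Antispeciality is equivalent to positivity in an orthocomplemented PCM. -/
theorem antispecial_iff_positive {A : Type*}
    (op : A → A → Option A) (zero one : A) (neg : A → A)
    (hcomm : ∀ x y, op x y = op y x)
    (hassoc : ∀ x y z,
      (op x y).bind (fun w => op w z) = (op y z).bind (fun w => op x w))
    (hunit : ∀ x, op zero x = some x)
    (horth : ∀ x y, op x y = some one ↔ y = neg x)
    (meet : A → A → Option A)
    (hmeet : ∀ x y, meet x y = (op (neg x) (neg y)).map neg) :
    (∀ x y u v, op x y = some u → meet x y = some v → u = one ∧ v = zero) ↔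
    (∀ x y, op x y = some zero → x = zero ∧ y = zero) := by
  have hinv : ∀ x, neg (neg x) = x := by
    intro x
    have h1 : op x (neg x) = some one := (horth x (neg x)).mpr rfl
    have h2 : op (neg x) x = some one := by rw [hcomm]; exact h1
    exact ((horth (neg x) x).mp h2).symm
  have hnegzero : neg zero = one := by
    have h1 : op zero (neg zero) = some one := (horth zero (neg zero)).mpr rfl
    rw [hunit] at h1
    exact Option.some.inj h1
  have hnegone : neg one = zero := by rw [← hnegzero, hinv]
  constructor
  · intro H x y hxy
    have key : op x one = some (neg y) := by
      have h := hassoc x y (neg y)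
      rw [hxy, (horth y (neg y)).mpr rfl] at h
      simpa [hunit] using h.symm
    have hmx : meet x one = some x := by
      rw [hmeet, hnegone, hcomm, hunit]
      simp [hinv]
    obtain ⟨h1, h2⟩ := H x one (neg y) x key hmx
    refine ⟨h2, ?_⟩
    have : y = neg one := by rw [← h1, hinv]
    rw [this, hnegone]
  · intro P x y u v hxy hm
    rw [hmeet] at hm
    obtain ⟨w, hw, hwv⟩ := Option.map_eq_some_iff.mp hm
    have hwnv : w = neg v := by rw [← hwv, hinv]
    rw [hwnv] at hw
    -- Step A : op y (neg u) = some (neg x)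
    have hA : op y (neg u) = some (neg x) := by
      have h := hassoc x y (neg u)
      rw [hxy] at h
      simp only [Option.bind_some] at h
      rw [(horth u (neg u)).mpr rfl] at h
      cases ht : op y (neg u) with
      | none => rw [ht] at h; simp at h
      | some t =>
        rw [ht] at h
        simp only [Option.bind_some] at h
        have := (horth x t).mp h.symm
        rw [this]
    -- Step B : op (neg u) one = some (neg v)
    have hB : op (neg u) one = some (neg v) := by
      have h := hassoc (neg u) y (neg y)
      rw [hcomm (neg u) y, hA, (horth y (neg y)).mpr rfl] at h
      simp only [Option.bind_some] at h
      rw [hw] at h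
      exact h.symm
    -- Step D : op (neg u) v = some zero
    have hD : op (neg u) v = some zero := by
      have h := hassoc one (neg u) v
      rw [hcomm one (neg u), hB] at h
      simp only [Option.bind_some] at h
      rw [(horth (neg v) v).mpr (hinv v).symm] at h
      cases ht : op (neg u) v with
      | none => rw [ht] at h; simp at h
      | some t =>
        rw [ht] at h
        simp only [Option.bind_some] at h
        have := (horth one t).mp h.symm
        rw [this, hnegone]
    obtain ⟨h1, h2⟩ := P (neg u) v hD
    refine ⟨?_, h2⟩
    rw [← hinv u, h1, hnegzero]
end

section
/- Equivalence of the two forms of the modularity law in an effect algebra: writing M(x,y,z) for the statement '∃ u v w, x ⊕ y = some u ∧ u ⊓ z = some w ∧ y ⊓ z = some v ∧ x ⊕ v = some w' (i.e., (x ⊕ y) ⊓ z and x ⊕ (y ⊓ z) are both defined and equal), the following are equivalent: (i) for all x y z, x ≤ neg y and neg y ≤ z imply M(x,y,z); (ii) for all x y z, if x ⊕ y is defined and y ⊓ z is defined then M(x,y,z). -/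
/-- Equivalence of the two forms of the modularity law in an effect algebra. -/
theorem modularity_forms_equivalent {A : Type*}
    (op : A → A → Option A) (zero one : A) (neg : A → A)
    (hcomm : ∀ x y, op x y = op y x)
    (hassoc : ∀ x y z,
      (op x y).bind (fun w => op w z) = (op y z).bind (fun w => op x w))
    (hunit : ∀ x, op zero x = some x)
    (horth : ∀ x y, op x y = some one ↔ y = neg x)
    (hpos : ∀ x y, op x y = some zero → x = zero ∧ y = zero)
    (meet : A → A → Option A)
    (hmeet : ∀ x y, meet x y = (op (neg x) (neg y)).map neg)
    (M : A → A → A → Prop)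
    (hM : ∀ x y z, M x y z ↔ ∃ u v w, op x y = some u ∧ meet u z = some w ∧
      meet y z = some v ∧ op x v = some w) :
    (∀ x y z, (∃ v, op x v = some (neg y)) → (∃ v, op (neg y) v = some z) →
      M x y z) ↔
    (∀ x y z, (op x y).isSome → (meet y z).isSome → M x y z) := by
  -- x ⊕ neg x = 1
  have hone : ∀ x, op x (neg x) = some one := fun x => (horth x (neg x)).mpr rfl
  -- neg is involutive
  have hnegneg : ∀ x, neg (neg x) = x := by
    intro x
    have : op (neg x) x = some one := by rw [hcomm]; exact hone x
    exact ((horth (neg x) x).mp this).symm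
  -- symmetry of orthogonality
  have hsym : ∀ x y, (∃ v, op x v = some (neg y)) → (∃ v, op y v = some (neg x)) := by
    intro x y ⟨v, hv⟩
    have h := hassoc x v y
    rw [hv] at h
    simp only [Option.bind_some] at h
    rw [hcomm (neg y) y, hone y] at h
    cases hvy : op v y with
    | none => rw [hvy] at h; simp at h
    | some t =>
      rw [hvy] at h
      simp only [Option.bind_some] at h
      have ht : t = neg x := (horth x t).mp h.symm
      exact ⟨v, by rw [hcomm, hvy, ht]⟩
  -- x ≤ neg y → x ⊕ y defined
  have hdef : ∀ x y, (∃ v, op x v = some (neg y)) → (op x y).isSome := by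
    intro x y ⟨v, hv⟩
    have h := hassoc v x y
    rw [hcomm v x, hv] at h
    simp only [Option.bind_some] at h
    rw [hcomm (neg y) y, hone y] at h
    cases hxy : op x y with
    | none => rw [hxy] at h; simp at h
    | some s => simp [hxy]
  -- x ⊕ y defined → x ≤ neg y
  have hle : ∀ x y, (op x y).isSome → (∃ v, op x v = some (neg y)) := by
    intro x y h
    obtain ⟨u, hu⟩ := Option.isSome_iff_exists.mp h
    have h2 := hassoc x y (neg u)
    rw [hu] at h2
    simp only [Option.bind_some] at h2
    rw [hone u] at h2
    cases hyt : op y (neg u) with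
    | none => rw [hyt] at h2; simp at h2
    | some t =>
      rw [hyt] at h2
      simp only [Option.bind_some] at h2
      have ht : t = neg x := (horth x t).mp h2.symm
      exact hsym y x ⟨neg u, by rw [hyt, ht]⟩
  constructor
  · intro H x y z h1 h2
    apply H x y z (hle x y h1)
    rw [hmeet] at h2
    have h3 : (op (neg y) (neg z)).isSome := by
      cases h : op (neg y) (neg z) with
      | none => rw [h] at h2; simp at h2
      | some t => simp
    obtain ⟨v, hv⟩ := hle (neg y) (neg z) h3
    exact ⟨v, by rw [hv, hnegneg]⟩
  · intro H x y z h1 h2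
    apply H x y z (hdef x y h1)
    rw [hmeet]
    obtain ⟨v, hv⟩ := h2
    have : (op (neg y) (neg z)).isSome := by
      apply hdef
      exact ⟨v, by rw [hv, hnegneg]⟩
    obtain ⟨t, ht⟩ := Option.isSome_iff_exists.mp this
    simp [ht]
end

section
/- A commutative monoid in the category of relations is single-valued iff it is special (the Rel instance): let m : A → A → A → Prop be a relational binary operation on a type A that is commutative (m x y a ↔ m y x a for all x y a) and has unit 0 (m 0 x a ↔ a = x for all x a), and define S : A → A → Prop by S a b := ∃ x y, m x y a ∧ m x y b. Then m is single-valued (for all x y a b, m x y a → m x y b → a = b) if and only if for all a b, (∃ c, S a c ∧ S b c) ↔ a = b (i.e., the symmetric relation S = m ∘ m† is unitary; equivalently S is the equality relation). -/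
/-- A commutative relational monoid is single-valued iff it is special, i.e.
`m ∘ m†` is unitary. -/
theorem singleValued_iff_special {A : Type*}
    (m : A → A → A → Prop) (zero : A)
    (hcomm : ∀ x y a, m x y a ↔ m y x a)
    (hunit : ∀ x a, m zero x a ↔ a = x)
    (S : A → A → Prop)
    (hS : ∀ a b, S a b ↔ ∃ x y, m x y a ∧ m x y b) :
    (∀ x y a b, m x y a → m x y b → a = b) ↔
    (∀ a b, (∃ c, S a c ∧ S b c) ↔ a = b) := by
  have hrefl : ∀ a, S a a := fun a =>
    (hS a a).mpr ⟨zero, a, (hunit a a).mpr rfl, (hunit a a).mpr rfl⟩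
  constructor
  · intro hsv a b
    constructor
    · rintro ⟨c, hac, hbc⟩
      obtain ⟨x, y, h1, h2⟩ := (hS a c).mp hac
      obtain ⟨u, v, h3, h4⟩ := (hS b c).mp hbc
      exact (hsv x y a c h1 h2).trans (hsv u v b c h3 h4).symm
    · rintro rfl; exact ⟨a, hrefl a, hrefl a⟩
  · intro hu x y a b h1 h2
    exact (hu a b).mp ⟨b, (hS a b).mpr ⟨x, y, h1, h2⟩, hrefl b⟩
end

section
/- Relational composition distributes over intersection exactly for single-valued relations: for a relation P : α → β → Prop, the following are equivalent: (i) for every type γ and all relations R S : β → γ → Prop and all a c, (∃ b, P a b ∧ R b c ∧ S b c) ↔ ((∃ b, P a b ∧ R b c) ∧ (∃ b, P a b ∧ S b c)) (i.e., P ; (R ∩ S) = (P ; R) ∩ (P ; S)); (ii) P is single-valued (for all a b₁ b₂, P a b₁ → P a b₂ → b₁ = b₂). -/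
universe u v w

/-- Relational composition distributes over intersection exactly for
single-valued relations. -/
theorem comp_distrib_inter_iff_singleValued {α : Type u} {β : Type v}
    (P : α → β → Prop) :
    (∀ (γ : Type w) (R S : β → γ → Prop) (a : α) (c : γ),
      (∃ b, P a b ∧ R b c ∧ S b c) ↔
      ((∃ b, P a b ∧ R b c) ∧ (∃ b, P a b ∧ S b c))) ↔
    (∀ a b₁ b₂, P a b₁ → P a b₂ → b₁ = b₂) := by
  constructor
  · intro h a b₁ b₂ h1 h2
    have := (h PUnit (fun b _ => b = b₁) (fun b _ => b = b₂) a PUnit.unit).mpr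
      ⟨⟨b₁, h1, rfl⟩, ⟨b₂, h2, rfl⟩⟩
    obtain ⟨b, _, rfl, rfl⟩ := this
    rfl
  · intro h γ R S a c
    constructor
    · rintro ⟨b, hb, hr, hs⟩
      exact ⟨⟨b, hb, hr⟩, ⟨b, hb, hs⟩⟩
    · rintro ⟨⟨b₁, hb1, hr⟩, ⟨b₂, hb2, hs⟩⟩
      exact ⟨b₁, hb1, hr, h a b₁ b₂ hb1 hb2 ▸ hs⟩
end
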